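/- arXiv:2010.02328 — 6 statements merged into one kernel-verified Lean document; each statement's English description precedes it below -/
import Mathlib

section
/- For $i \ge 1$ set $z_i = -\dfrac{u^{p^i}\, \varphi^{i+1}(\lambda)}{p \prod_{j=1}^{i} \varphi^j(E(u))^{h-1}}$ with $E(u) = u - p$, $\varphi(u) = u^p$, and $\lambda = \prod_{n\ge0}(1 - u^{p^n}/p)$. Then $v_p(z_i|_{u=p}) \ge p^i - i(h-1) - 1$, and for $0 < n < p - 1$, $v_p\big(\tfrac{d^n z_i}{du^n}\big|_{u=p}\big) \ge p^i + \min(i,p) - n - i(h-1) - 1$. -/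
/-- The function `z_i = -(u^{p^i} · φ^{i+1}(λ)) / (p · ∏_{j=1}^i φ^j(E(u))^{h-1})`
on `ℚ_p`, where `E(u) = u - p`, `φ(u) = u^p`, `λ = ∏_{n≥0}(1 - u^{p^n}/p)`,
so `φ^{i+1}(λ)(u) = ∏_{n ≥ i+1}(1 - u^{p^n}/p)` and `φ^j(E(u)) = u^{p^j} - p`. -/
noncomputable def zI (p : ℕ) [Fact p.Prime] (h i : ℕ) : ℚ_[p] → ℚ_[p] :=
  fun u => -(u ^ (p ^ i) * (∏' n : ℕ, (1 - u ^ (p ^ (n + i + 1)) / (p : ℚ_[p])))) /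
    ((p : ℚ_[p]) * ∏ j ∈ Finset.Icc 1 i, (u ^ (p ^ j) - (p : ℚ_[p])) ^ (h - 1))

/-!
Write `u = p + t` and expand every ingredient of `z_i` as a power series in `t`. The
`t^k`-coefficient of `u^{p^j}` is `p^{p^j-k} C(p^j,k)`, of norm at most `p^{k-p^j}`, and for
`0 < k < p` the binomial coefficient contributes a further factor `p^{-j}`. Coefficient bounds
`‖a_k‖ ≤ c · p^k · (p^{-g} if 1 ≤ k ≤ p - 1)` are multiplicative in `c`, because the weight is
supermultiplicative and the norm ultrametric; for the same reason a series whose constant term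
has norm exactly `c` has an inverse bounded with constant `c⁻¹`. Hence the expansion of `z_i`
obeys such a bound with `g = min(i, p)` and `c = p^{1 - p^i + i(h-1)}`; the infinite product
enters as the coefficientwise limit of its partial products. The series converges for
`|t| < 1/p`, so the `n`-th derivative at `u = p` is `n!` times the `n`-th coefficient, and
`‖n!‖ ≤ 1`.
-/

open PowerSeries Finset Filter Topology
open scoped Nat

namespace PowerSeries

structure IsCoeffWeight (w : ℕ → ℝ) : Prop where
  map_zero : w 0 = 1
  nonneg : ∀ k, 0 ≤ w k
  mul_le : ∀ a b, w a * w b ≤ w (a + b)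

def CoeffBoundedBy {R : Type*} [Semiring R] [Norm R] (w : ℕ → ℝ) (c : ℝ) (f : R⟦X⟧) : Prop :=
  ∀ k, ‖coeff k f‖ ≤ c * w k

variable {R : Type*} [NormedCommRing R] {w : ℕ → ℝ} {c c' : ℝ} {f g : R⟦X⟧}

theorem norm_coeff_mul_le_of_le [IsUltrametricDist R] {u v : ℕ → ℝ}
    (hf : ∀ k, ‖coeff k f‖ ≤ u k) (hg : ∀ k, ‖coeff k g‖ ≤ v k)
    (huv : ∀ a b, u a * v b ≤ w (a + b)) (k : ℕ) : ‖coeff k (f * g)‖ ≤ w k := by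
  have hprod : ∀ a b, ‖coeff a f‖ * ‖coeff b g‖ ≤ w (a + b) := fun a b =>
    (mul_le_mul (hf a) (hg b) (norm_nonneg _) ((norm_nonneg _).trans (hf a))).trans (huv a b)
  rw [coeff_mul]
  refine IsUltrametricDist.norm_sum_le_of_forall_le_of_nonneg
    ((mul_nonneg (norm_nonneg _) (norm_nonneg _)).trans (by simpa using hprod k 0)) ?_
  rintro ⟨a, b⟩ hab
  rw [HasAntidiagonal.mem_antidiagonal] at hab
  exact (norm_mul_le _ _).trans (hab ▸ hprod a b)

namespace CoeffBoundedBy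

theorem nonneg (hw : IsCoeffWeight w) (hf : CoeffBoundedBy w c f) : 0 ≤ c := by
  simpa [hw.map_zero] using (norm_nonneg _).trans (hf 0)

theorem mono (hw : IsCoeffWeight w) (hf : CoeffBoundedBy w c f) (hcc' : c ≤ c') :
    CoeffBoundedBy w c' f :=
  fun k => (hf k).trans (mul_le_mul_of_nonneg_right hcc' (hw.nonneg k))

theorem neg (hf : CoeffBoundedBy w c f) : CoeffBoundedBy w c (-f) := fun k => by
  rw [map_neg, norm_neg]
  exact hf k

theorem C_mul (hf : CoeffBoundedBy w c f) (a : R) : CoeffBoundedBy w (‖a‖ * c) (C a * f) :=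
  fun k => by
    rw [coeff_C_mul, mul_assoc]
    exact (norm_mul_le _ _).trans (mul_le_mul_of_nonneg_left (hf k) (norm_nonneg a))

theorem one [NormOneClass R] (hw : IsCoeffWeight w) : CoeffBoundedBy w 1 (1 : R⟦X⟧) :=
  fun k => by
    rw [coeff_one, one_mul]
    split_ifs with hk
    · simp [hk, hw.map_zero]
    · simpa using hw.nonneg k

section Ultrametric

variable [IsUltrametricDist R]

theorem mul (hw : IsCoeffWeight w) (hf : CoeffBoundedBy w c f) (hg : CoeffBoundedBy w c' g) :
    CoeffBoundedBy w (c * c') (f * g) :=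
  norm_coeff_mul_le_of_le hf hg fun a b => by
    rw [mul_mul_mul_comm]
    exact mul_le_mul_of_nonneg_left (hw.mul_le a b) (mul_nonneg (hf.nonneg hw) (hg.nonneg hw))

theorem sub (hf : CoeffBoundedBy w c f) (hg : CoeffBoundedBy w c g) :
    CoeffBoundedBy w c (f - g) := fun k => by
  rw [map_sub, sub_eq_add_neg]
  exact (IsUltrametricDist.norm_add_le_max _ _).trans
    (max_le (hf k) ((norm_neg _).le.trans (hg k)))

theorem prod [NormOneClass R] {ι : Type*} (hw : IsCoeffWeight w) (s : Finset ι)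
    {F : ι → R⟦X⟧} {C : ι → ℝ} (hF : ∀ j ∈ s, CoeffBoundedBy w (C j) (F j)) :
    CoeffBoundedBy w (∏ j ∈ s, C j) (∏ j ∈ s, F j) := by
  induction s using Finset.cons_induction with
  | empty => simpa using one hw
  | cons a s ha ih =>
    rw [prod_cons, prod_cons]
    exact (hF a (mem_cons_self a s)).mul hw (ih fun j hj => hF j (mem_cons_of_mem hj))

theorem pow [NormOneClass R] (hw : IsCoeffWeight w) (hf : CoeffBoundedBy w c f) (n : ℕ) :
    CoeffBoundedBy w (c ^ n) (f ^ n) := by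
  simpa using prod hw (range n) (F := fun _ => f) fun _ _ => hf

end Ultrametric

theorem inv {K : Type*} [NormedField K] [IsUltrametricDist K] {f : K⟦X⟧}
    (hw : IsCoeffWeight w) (hf : CoeffBoundedBy w c f) (h0 : ‖constantCoeff f‖ = c) :
    CoeffBoundedBy w c⁻¹ f⁻¹ := by
  intro n
  induction n using Nat.strong_induction_on with
  | _ n ih =>
    rw [coeff_inv]
    split_ifs with hn
    · simp [hn, h0, hw.map_zero]
    rw [norm_mul, norm_neg, norm_inv, h0]
    refine mul_le_mul_of_nonneg_left ?_ (inv_nonneg.mpr (hf.nonneg hw))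
    refine IsUltrametricDist.norm_sum_le_of_forall_le_of_nonneg (hw.nonneg n) ?_
    rintro ⟨a, b⟩ hab
    rw [HasAntidiagonal.mem_antidiagonal] at hab
    split_ifs with hb
    · calc ‖coeff a f * coeff b f⁻¹‖ ≤ (c * w a) * (c⁻¹ * w b) :=
            (norm_mul_le _ _).trans (mul_le_mul (hf a) (ih b hb) (norm_nonneg _)
              (mul_nonneg (hf.nonneg hw) (hw.nonneg a)))
        _ = (c * c⁻¹) * (w a * w b) := by ring
        _ ≤ 1 * w (a + b) := mul_le_mul mul_inv_le_one (hw.mul_le a b)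
              (mul_nonneg (hw.nonneg a) (hw.nonneg b)) zero_le_one
        _ = w n := by rw [one_mul, hab]
    · simpa using hw.nonneg n

end CoeffBoundedBy

def lowDegreeWeight (r ε : ℝ) (N k : ℕ) : ℝ := r ^ k * if k ∈ Icc 1 N then ε else 1

section lowDegreeWeight

variable {r ε : ℝ} {N : ℕ}

theorem lowDegreeWeight_zero : lowDegreeWeight r ε N 0 = 1 := by simp [lowDegreeWeight]

theorem lowDegreeWeight_nonneg (hr : 0 ≤ r) (hε : 0 ≤ ε) (k : ℕ) :
    0 ≤ lowDegreeWeight r ε N k := by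
  unfold lowDegreeWeight
  split_ifs <;> positivity

theorem lowDegreeWeight_le_pow (hr : 0 ≤ r) (hε1 : ε ≤ 1) (k : ℕ) :
    lowDegreeWeight r ε N k ≤ r ^ k := by
  unfold lowDegreeWeight
  split_ifs
  · exact mul_le_of_le_one_right (by positivity) hε1
  · rw [mul_one]

theorem lowDegreeWeight_mul_le (hr : 0 ≤ r) (hε : 0 ≤ ε) (hε1 : ε ≤ 1) (a b : ℕ) :
    lowDegreeWeight r ε N a * lowDegreeWeight r ε N b ≤ lowDegreeWeight r ε N (a + b) := by
  unfold lowDegreeWeight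
  rw [mul_mul_mul_comm, ← pow_add]
  refine mul_le_mul_of_nonneg_left ?_ (by positivity)
  simp only [mem_Icc]
  split_ifs <;> first | omega | nlinarith

theorem isCoeffWeight_lowDegreeWeight (hr : 0 ≤ r) (hε : 0 ≤ ε) (hε1 : ε ≤ 1) :
    IsCoeffWeight (lowDegreeWeight r ε N) :=
  ⟨lowDegreeWeight_zero, lowDegreeWeight_nonneg hr hε, lowDegreeWeight_mul_le hr hε hε1⟩

theorem mul_lowDegreeWeight_le_mul {ε' : ℝ} (hr : 0 ≤ r) (hc : c ≤ c') (hcε : c * ε ≤ c' * ε')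
    (k : ℕ) : c * lowDegreeWeight r ε N k ≤ c' * lowDegreeWeight r ε' N k := by
  unfold lowDegreeWeight
  have hrk : 0 ≤ r ^ k := by positivity
  split_ifs <;> nlinarith

theorem CoeffBoundedBy.weaken_lowDegreeWeight {ε' : ℝ}
    (hf : CoeffBoundedBy (lowDegreeWeight r ε N) c f) (hr : 0 ≤ r) (hc : c ≤ c')
    (hcε : c * ε ≤ c' * ε') : CoeffBoundedBy (lowDegreeWeight r ε' N) c' f :=
  fun k => (hf k).trans (mul_lowDegreeWeight_le_mul hr hc hcε k)

end lowDegreeWeight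

section Evaluation

variable {K : Type*} [NormedField K] {f g : K⟦X⟧} {t : K}

noncomputable def evalTsum (f : K⟦X⟧) (t : K) : K := ∑' k, coeff k f * t ^ k

theorem evalTsum_coe (P : Polynomial K) : evalTsum (P : K⟦X⟧) t = P.eval t := by
  rw [evalTsum, tsum_eq_sum (s := range (P.natDegree + 1)), Polynomial.eval_eq_sum_range]
  · simp only [Polynomial.coeff_coe]
  · intro k hk
    rw [mem_range, not_lt] at hk
    rw [Polynomial.coeff_coe, Polynomial.coeff_eq_zero_of_natDegree_lt (by omega), zero_mul]

theorem summable_norm_coeff_mul_pow {r : ℝ} (hr : 0 ≤ r) (hf : ∀ k, ‖coeff k f‖ ≤ c * r ^ k)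
    (ht : r * ‖t‖ < 1) : Summable fun k => ‖coeff k f * t ^ k‖ := by
  refine Summable.of_nonneg_of_le (fun k => norm_nonneg _) (fun k => ?_)
    ((summable_geometric_of_lt_one (by positivity) ht).mul_left c)
  rw [norm_mul, norm_pow, mul_pow, ← mul_assoc]
  exact mul_le_mul_of_nonneg_right (hf k) (by positivity)

variable [CompleteSpace K]

theorem evalTsum_mul (hf : Summable fun k => ‖coeff k f * t ^ k‖)
    (hg : Summable fun k => ‖coeff k g * t ^ k‖) :
    evalTsum (f * g) t = evalTsum f t * evalTsum g t := by
  rw [evalTsum, evalTsum, evalTsum, tsum_mul_tsum_eq_tsum_sum_antidiagonal_of_summable_norm hf hg]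
  refine tsum_congr fun n => ?_
  rw [coeff_mul, sum_mul]
  refine sum_congr rfl fun ab hab => ?_
  rw [← HasAntidiagonal.mem_antidiagonal.mp hab, pow_add]
  ring

theorem tendsto_evalTsum {F : ℕ → K⟦X⟧} {r : ℝ} (hr : 0 ≤ r) (ht : r * ‖t‖ < 1)
    (hF : ∀ k, Tendsto (fun M => coeff k (F M)) atTop (𝓝 (coeff k f)))
    (hb : ∀ M k, ‖coeff k (F M)‖ ≤ c * r ^ k) :
    Tendsto (fun M => evalTsum (F M) t) atTop (𝓝 (evalTsum f t)) := by
  refine tendsto_tsum_of_dominated_convergence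
    ((summable_geometric_of_lt_one (by positivity) ht).mul_left c)
    (fun k => (hF k).mul_const _) (Eventually.of_forall fun M k => ?_)
  rw [norm_mul, norm_pow, mul_pow, ← mul_assoc]
  exact mul_le_mul_of_nonneg_right (hb M k) (by positivity)

end Evaluation

end PowerSeries

section Analytic

variable {𝕜 : Type*} [NontriviallyNormedField 𝕜] {f : 𝕜 → 𝕜} {a : ℕ → 𝕜} {x : 𝕜}

theorem hasFPowerSeriesOnBall_ofScalars {r : NNReal} {C : ℝ} (hr : 0 < r)
    (ha : ∀ k, ‖a k‖ * r ^ k ≤ C)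
    (hf : ∀ y : 𝕜, ‖y‖ < r → HasSum (fun k => a k * y ^ k) (f (x + y))) :
    HasFPowerSeriesOnBall f (FormalMultilinearSeries.ofScalars 𝕜 a) x r where
  r_le := (FormalMultilinearSeries.ofScalars 𝕜 a).le_radius_of_bound C fun k => by
    rw [FormalMultilinearSeries.ofScalars_norm]
    exact ha k
  r_pos := by exact_mod_cast hr
  hasSum {y} hy := by
    rw [Metric.mem_eball, edist_zero_right] at hy
    simpa [FormalMultilinearSeries.ofScalars_apply_eq, mul_comm] using
      hf y (by simpa [enorm, ← NNReal.coe_lt_coe] using hy)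

theorem HasFPowerSeriesOnBall.iteratedDeriv_eq_factorial_mul [CompleteSpace 𝕜] {r : ENNReal}
    (hf : HasFPowerSeriesOnBall f (FormalMultilinearSeries.ofScalars 𝕜 a) x r) (n : ℕ) :
    iteratedDeriv n f x = n ! * a n := by
  have := hf.factorial_smul 1 n
  rw [iteratedFDeriv_apply_eq_iteratedDeriv_mul_prod, prod_const_one, one_smul,
    FormalMultilinearSeries.ofScalars_apply_eq] at this
  simpa using this.symm

end Analytic

open scoped Polynomial

namespace ZExpansion

theorem prod_Icc_zpow_neg_one (x : ℝ) (h i : ℕ) :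
    ∏ _j ∈ Icc 1 i, (x ^ (-1 : ℤ)) ^ (h - 1) = x ^ (-((i * (h - 1) : ℕ) : ℤ)) := by
  rw [prod_const, Nat.card_Icc, Nat.add_sub_cancel, ← pow_mul, ← zpow_natCast, ← zpow_mul]
  push_cast
  ring_nf

variable {p : ℕ} [hp : Fact p.Prime]

theorem one_le_p : (1 : ℝ) ≤ p := by exact_mod_cast hp.out.one_le

theorem p_ne_zero : (p : ℝ) ≠ 0 := by exact_mod_cast hp.out.ne_zero

theorem p_zpow_le_zpow {a b : ℤ} (h : a ≤ b) : (p : ℝ) ^ a ≤ (p : ℝ) ^ b :=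
  zpow_le_zpow_right₀ one_le_p h

theorem norm_choose_prime_pow_le (j : ℕ) {k : ℕ} (hk0 : k ≠ 0) (hkp : k < p) :
    ‖((p ^ j).choose k : ℚ_[p])‖ ≤ (p : ℝ) ^ (-(j : ℤ)) := by
  rcases le_or_gt k (p ^ j) with hkn | hkn
  · have hv : ((p ^ j).choose k).factorization p = j := by
      rw [Nat.factorization_choose_prime_pow hp.out hkn hk0,
        Nat.factorization_eq_zero_of_not_dvd fun h => by have := Nat.le_of_dvd (by omega) h; omega,
        Nat.sub_zero]
    have hdvd : p ^ j ∣ (p ^ j).choose k := by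
      simpa only [hv] using Nat.ordProj_dvd ((p ^ j).choose k) p
    simpa using (Padic.norm_int_le_pow_iff_dvd _ j).mpr (Int.natCast_dvd_natCast.mpr hdvd)
  · rw [Nat.choose_eq_zero_of_lt hkn, Nat.cast_zero, norm_zero]
    positivity

variable (p) in
noncomputable abbrev padicWeight (g : ℕ) : ℕ → ℝ :=
  lowDegreeWeight p ((p : ℝ) ^ (-(g : ℤ))) (p - 1)

theorem padicWeight_of_mem_Icc {g k : ℕ} (hk : k ∈ Icc 1 (p - 1)) :
    padicWeight p g k = (p : ℝ) ^ ((k : ℤ) - g) := by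
  rw [padicWeight, lowDegreeWeight, if_pos hk, ← zpow_natCast, ← zpow_add₀ p_ne_zero,
    ← sub_eq_add_neg]

theorem isCoeffWeight_padicWeight (g : ℕ) : IsCoeffWeight (padicWeight p g) :=
  isCoeffWeight_lowDegreeWeight (by positivity) (by positivity)
    (zpow_le_one_of_nonpos₀ one_le_p (by omega))

variable (p) in
noncomputable def uPoly : ℚ_[p][X] := Polynomial.X + Polynomial.C (p : ℚ_[p])

theorem coeffBoundedBy_uPoly_pow (j : ℕ) :
    CoeffBoundedBy (padicWeight p j) ((p : ℝ) ^ (-(p ^ j : ℤ)))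
      ((uPoly p ^ p ^ j : ℚ_[p][X]) : ℚ_[p]⟦X⟧) := by
  intro k
  rw [Polynomial.coeff_coe, uPoly, Polynomial.coeff_X_add_C_pow]
  rcases le_or_gt k (p ^ j) with hk | hk
  · rw [norm_mul, Padic.norm_p_pow, padicWeight, lowDegreeWeight, ← mul_assoc,
      ← zpow_natCast (p : ℝ) k, ← zpow_add₀ p_ne_zero, Nat.cast_sub hk]
    push_cast
    rw [show -(((p : ℤ) ^ j - k)) = -((p : ℤ) ^ j) + k by ring]
    refine mul_le_mul_of_nonneg_left ?_ (by positivity)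
    split_ifs with hkN
    · rw [mem_Icc] at hkN
      exact norm_choose_prime_pow_le j (by omega) (by omega)
    · exact IsUltrametricDist.norm_natCast_le_one ℚ_[p] _
  · rw [Nat.choose_eq_zero_of_lt hk, Nat.cast_zero, mul_zero, norm_zero]
    exact mul_nonneg (by positivity) ((isCoeffWeight_padicWeight j).nonneg k)

variable (p) in
noncomputable def uPowDivP (j : ℕ) : ℚ_[p][X] := Polynomial.C (p : ℚ_[p])⁻¹ * uPoly p ^ p ^ j

theorem coeffBoundedBy_uPowDivP (j : ℕ) :
    CoeffBoundedBy (padicWeight p j) ((p : ℝ) ^ (1 - (p ^ j : ℤ)))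
      (uPowDivP p j : ℚ_[p]⟦X⟧) := by
  have h := (coeffBoundedBy_uPoly_pow (p := p) j).C_mul (p : ℚ_[p])⁻¹
  rw [norm_inv, Padic.norm_p, inv_inv] at h
  rwa [uPowDivP, Polynomial.coe_mul, Polynomial.coe_C, sub_eq_add_neg, zpow_add₀ p_ne_zero,
    zpow_one]

variable (p) in
noncomputable def tailFactor (i m : ℕ) : ℚ_[p][X] := 1 - uPowDivP p (m + i + 1)

theorem coeffBoundedBy_tailFactor {g : ℕ} (hgp : g ≤ p) (i m : ℕ) :
    CoeffBoundedBy (padicWeight p g) 1 (tailFactor p i m : ℚ_[p]⟦X⟧) := by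
  have hN : (p : ℤ) ≤ (p : ℤ) ^ (m + i + 1) := by exact_mod_cast Nat.le_self_pow (by omega) p
  have hp2 := hp.out.two_le
  rw [tailFactor, Polynomial.coe_sub, Polynomial.coe_one]
  refine (CoeffBoundedBy.one (isCoeffWeight_padicWeight g)).sub
    ((coeffBoundedBy_uPowDivP _).weaken_lowDegreeWeight (by positivity) ?_ ?_)
  · exact zpow_le_one_of_nonpos₀ one_le_p (by omega)
  · rw [← zpow_add₀ p_ne_zero, one_mul]
    exact p_zpow_le_zpow (by push_cast; omega)

variable (p) in
noncomputable def denomFactor (j : ℕ) : ℚ_[p][X] := uPoly p ^ p ^ j - Polynomial.C (p : ℚ_[p])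

theorem coeffBoundedBy_denomFactor {g j : ℕ} (hgp : g ≤ p) (hj : 1 ≤ j) :
    CoeffBoundedBy (padicWeight p g) ((p : ℝ) ^ (-1 : ℤ)) (denomFactor p j : ℚ_[p]⟦X⟧) := by
  have hN : (p : ℤ) ≤ (p : ℤ) ^ j := by exact_mod_cast Nat.le_self_pow (by omega) p
  have hp2 := hp.out.two_le
  rw [denomFactor, Polynomial.coe_sub, Polynomial.coe_C]
  refine ((coeffBoundedBy_uPoly_pow j).weaken_lowDegreeWeight (by positivity) ?_ ?_).sub ?_
  · exact p_zpow_le_zpow (by omega)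
  · simp only [← zpow_add₀ p_ne_zero]
    exact p_zpow_le_zpow (by omega)
  · intro k
    rw [coeff_C]
    split_ifs with hk
    · simp [hk, Padic.norm_p, lowDegreeWeight_zero]
    · rw [norm_zero]
      exact mul_nonneg (by positivity) ((isCoeffWeight_padicWeight g).nonneg k)

theorem norm_eval_zero_denomFactor {j : ℕ} (hj : 1 ≤ j) :
    ‖(denomFactor p j).eval 0‖ = (p : ℝ) ^ (-1 : ℤ) := by
  have hlt : ‖(p : ℚ_[p]) ^ p ^ j‖ < ‖-(p : ℚ_[p])‖ := by
    rw [norm_neg, Padic.norm_p_pow, Padic.norm_p, ← zpow_neg_one]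
    refine zpow_lt_zpow_right₀ (by exact_mod_cast hp.out.one_lt) ?_
    have : 2 ≤ p ^ j := hp.out.two_le.trans (Nat.le_self_pow (by omega) p)
    omega
  simp only [denomFactor, uPoly, Polynomial.eval_sub, Polynomial.eval_pow, Polynomial.eval_add,
    Polynomial.eval_X, Polynomial.eval_C, zero_add]
  rw [sub_eq_add_neg, Padic.add_eq_max_of_ne hlt.ne, max_eq_right hlt.le, norm_neg, Padic.norm_p,
    zpow_neg_one]

variable (p) in
noncomputable def denomPoly (h i : ℕ) : ℚ_[p][X] := ∏ j ∈ Icc 1 i, denomFactor p j ^ (h - 1)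

theorem coeffBoundedBy_denomPoly {g : ℕ} (hgp : g ≤ p) (h i : ℕ) :
    CoeffBoundedBy (padicWeight p g) ((p : ℝ) ^ (-((i * (h - 1) : ℕ) : ℤ)))
      (denomPoly p h i : ℚ_[p]⟦X⟧) := by
  have hcoe : (denomPoly p h i : ℚ_[p]⟦X⟧) =
      ∏ j ∈ Icc 1 i, (denomFactor p j : ℚ_[p]⟦X⟧) ^ (h - 1) := by
    simp only [denomPoly, ← Polynomial.coeToPowerSeries.ringHom_apply, map_prod, map_pow]
  rw [← prod_Icc_zpow_neg_one, hcoe]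
  exact .prod (isCoeffWeight_padicWeight g) _ fun j hj =>
    (coeffBoundedBy_denomFactor hgp (mem_Icc.mp hj).1).pow (isCoeffWeight_padicWeight g) (h - 1)

theorem norm_constantCoeff_denomPoly (h i : ℕ) :
    ‖constantCoeff (denomPoly p h i : ℚ_[p]⟦X⟧)‖ = (p : ℝ) ^ (-((i * (h - 1) : ℕ) : ℤ)) := by
  rw [← prod_Icc_zpow_neg_one, Polynomial.constantCoeff_coe, Polynomial.coeff_zero_eq_eval_zero,
    denomPoly, Polynomial.eval_prod, norm_prod]
  refine prod_congr rfl fun j hj => ?_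
  rw [Polynomial.eval_pow, norm_pow, norm_eval_zero_denomFactor (mem_Icc.mp hj).1]

variable (p) in
noncomputable def tailPartialProd (i M : ℕ) : ℚ_[p][X] := ∏ m ∈ range M, tailFactor p i m

variable (p) in
noncomputable def tailSeries (i : ℕ) : ℚ_[p]⟦X⟧ :=
  mk fun k => limUnder atTop fun M => coeff k (tailPartialProd p i M : ℚ_[p]⟦X⟧)

theorem coeffBoundedBy_tailPartialProd {g : ℕ} (hgp : g ≤ p) (i M : ℕ) :
    CoeffBoundedBy (padicWeight p g) 1 (tailPartialProd p i M : ℚ_[p]⟦X⟧) := by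
  rw [tailPartialProd, ← Polynomial.coeToPowerSeries.ringHom_apply, map_prod, ← prod_const_one]
  exact .prod (isCoeffWeight_padicWeight g) _ fun m _ => coeffBoundedBy_tailFactor hgp i m

theorem norm_coeff_tailPartialProd_succ_sub_le (i M k : ℕ) :
    ‖coeff k (tailPartialProd p i (M + 1) : ℚ_[p]⟦X⟧) -
      coeff k (tailPartialProd p i M : ℚ_[p]⟦X⟧)‖ ≤ padicWeight p 0 k * (p : ℝ)⁻¹ ^ M := by
  have hw := isCoeffWeight_padicWeight (p := p) 0
  have hsucc : (tailPartialProd p i (M + 1) : ℚ_[p]⟦X⟧) - tailPartialProd p i M =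
      tailPartialProd p i M * -(uPowDivP p (M + i + 1) : ℚ_[p]⟦X⟧) := by
    simp only [tailPartialProd, prod_range_succ, tailFactor]
    push_cast
    ring
  have hN : (M : ℤ) + i + 1 < (p : ℤ) ^ (M + i + 1) := by
    exact_mod_cast Nat.lt_pow_self hp.out.one_lt
  have hbound := (coeffBoundedBy_tailPartialProd (Nat.zero_le p) i M).mul hw
    ((coeffBoundedBy_uPowDivP (M + i + 1)).neg.weaken_lowDegreeWeight (by positivity) le_rfl
      (mul_le_mul_of_nonneg_left (zpow_le_one_of_nonpos₀ one_le_p (by omega)) (by positivity))) k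
  rw [← hsucc, map_sub, one_mul] at hbound
  refine hbound.trans ((mul_le_mul_of_nonneg_right ?_ (hw.nonneg k)).trans_eq (mul_comm _ _))
  rw [inv_pow, ← zpow_natCast, ← zpow_neg]
  exact p_zpow_le_zpow (by omega)

theorem tendsto_coeff_tailPartialProd (i k : ℕ) :
    Tendsto (fun M => coeff k (tailPartialProd p i M : ℚ_[p]⟦X⟧)) atTop
      (𝓝 (coeff k (tailSeries p i))) := by
  rw [tailSeries, coeff_mk]
  refine (cauchySeq_of_le_geometric (p : ℝ)⁻¹ (padicWeight p 0 k)
    (inv_lt_one_of_one_lt₀ (by exact_mod_cast hp.out.one_lt)) fun M => ?_).tendsto_limUnder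
  rw [dist_eq_norm, norm_sub_rev]
  exact norm_coeff_tailPartialProd_succ_sub_le i M k

theorem coeffBoundedBy_tailSeries {g : ℕ} (hgp : g ≤ p) (i : ℕ) :
    CoeffBoundedBy (padicWeight p g) 1 (tailSeries p i) := fun k =>
  le_of_tendsto (tendsto_coeff_tailPartialProd i k).norm
    (Eventually.of_forall fun M => coeffBoundedBy_tailPartialProd hgp i M k)

theorem p_mul_norm_lt_one {t : ℚ_[p]} (ht : ‖t‖ < (p : ℝ)⁻¹) : (p : ℝ) * ‖t‖ < 1 := by
  simpa [p_ne_zero] using mul_lt_mul_of_pos_left ht (p_ne_zero.symm.lt_of_le (Nat.cast_nonneg p))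

theorem norm_coeff_le_pow_of_coeffBoundedBy {g : ℕ} {c : ℝ} {f : ℚ_[p]⟦X⟧}
    (hf : CoeffBoundedBy (padicWeight p g) c f) (k : ℕ) : ‖coeff k f‖ ≤ c * (p : ℝ) ^ k :=
  (hf k).trans (mul_le_mul_of_nonneg_left (lowDegreeWeight_le_pow (Nat.cast_nonneg p)
    (zpow_le_one_of_nonpos₀ one_le_p (by omega)) k) (hf.nonneg (isCoeffWeight_padicWeight g)))

theorem summable_of_coeffBoundedBy {g : ℕ} {c : ℝ} {f : ℚ_[p]⟦X⟧} {t : ℚ_[p]}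
    (hf : CoeffBoundedBy (padicWeight p g) c f) (ht : ‖t‖ < (p : ℝ)⁻¹) :
    Summable fun k => ‖coeff k f * t ^ k‖ :=
  summable_norm_coeff_mul_pow (Nat.cast_nonneg p) (norm_coeff_le_pow_of_coeffBoundedBy hf)
    (p_mul_norm_lt_one ht)

theorem evalTsum_tailSeries {t : ℚ_[p]} (ht : ‖t‖ < (p : ℝ)⁻¹) (i : ℕ) :
    evalTsum (tailSeries p i) t = ∏' n, (1 - (p + t) ^ p ^ (n + i + 1) / p) := by
  have hpartial : Tendsto (fun M => ∏ n ∈ range M, (1 - (p + t) ^ p ^ (n + i + 1) / p)) atTop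
      (𝓝 (evalTsum (tailSeries p i) t)) := by
    refine (tendsto_evalTsum (c := 1) (Nat.cast_nonneg p) (p_mul_norm_lt_one ht)
      (tendsto_coeff_tailPartialProd i) fun M k => ?_).congr fun M => ?_
    · exact norm_coeff_le_pow_of_coeffBoundedBy (coeffBoundedBy_tailPartialProd le_rfl i M) k
    · simp only [evalTsum_coe, tailPartialProd, tailFactor, uPowDivP, uPoly, Polynomial.eval_prod,
        Polynomial.eval_sub, Polynomial.eval_one, Polynomial.eval_mul, Polynomial.eval_C,
        Polynomial.eval_pow, Polynomial.eval_add, Polynomial.eval_X]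
      exact prod_congr rfl fun n _ => by ring
  have hpt : ‖(p : ℚ_[p]) + t‖ ≤ (p : ℝ)⁻¹ :=
    (IsUltrametricDist.norm_add_le_max _ _).trans (max_le Padic.norm_p.le ht.le)
  have hmult : Multipliable fun n => 1 - ((p : ℚ_[p]) + t) ^ p ^ (n + i + 1) / p := by
    simp_rw [sub_eq_add_neg]
    refine multipliable_one_add_of_summable
      (.of_nonneg_of_le (fun _ => norm_nonneg _) (fun n => ?_)
        (summable_geometric_of_lt_one (r := (p : ℝ)⁻¹) (by positivity)
          (inv_lt_one_of_one_lt₀ (by exact_mod_cast hp.out.one_lt))))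
    have hN : n + 1 ≤ p ^ (n + i + 1) := (Nat.lt_pow_self hp.out.one_lt).le.trans' (by omega)
    rw [norm_neg, norm_div, norm_pow, Padic.norm_p, div_inv_eq_mul]
    calc ‖(p : ℚ_[p]) + t‖ ^ p ^ (n + i + 1) * p ≤ (p : ℝ)⁻¹ ^ (n + 1) * p := by
          gcongr
          exact (pow_le_pow_left₀ (norm_nonneg _) hpt _).trans
            (pow_le_pow_of_le_one (by positivity) (inv_le_one_of_one_le₀ one_le_p) hN)
      _ = (p : ℝ)⁻¹ ^ n := by rw [pow_succ, mul_assoc, inv_mul_cancel₀ p_ne_zero, mul_one]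
  exact tendsto_nhds_unique hpartial hmult.hasProd.tendsto_prod_nat

variable (p) in
noncomputable def zSeries (h i : ℕ) : ℚ_[p]⟦X⟧ :=
  -(uPowDivP p i : ℚ_[p]⟦X⟧) * (tailSeries p i * (denomPoly p h i : ℚ_[p]⟦X⟧)⁻¹)

theorem coeffBoundedBy_zSeries (h i : ℕ) :
    CoeffBoundedBy (padicWeight p (min i p))
      ((p : ℝ) ^ (1 - (p : ℤ) ^ i + ((i * (h - 1) : ℕ) : ℤ))) (zSeries p h i) := by
  have hw := isCoeffWeight_padicWeight (p := p) (min i p)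
  refine (((coeffBoundedBy_uPowDivP i).neg.weaken_lowDegreeWeight (by positivity) le_rfl ?_).mul hw
    ((coeffBoundedBy_tailSeries (min_le_right i p) i).mul hw
      ((coeffBoundedBy_denomPoly (min_le_right i p) h i).inv hw
        (norm_constantCoeff_denomPoly h i)))).mono hw ?_
  · exact mul_le_mul_of_nonneg_left (p_zpow_le_zpow (by omega)) (by positivity)
  · rw [one_mul, ← zpow_neg, neg_neg, ← zpow_add₀ p_ne_zero]

theorem evalTsum_zSeries {t : ℚ_[p]} (ht : ‖t‖ < (p : ℝ)⁻¹) (h i : ℕ) :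
    evalTsum (zSeries p h i) t = zI p h i (p + t) := by
  have hw := isCoeffWeight_padicWeight (p := p) 0
  have hD := coeffBoundedBy_denomPoly (Nat.zero_le p) h i
  have hDinv := hD.inv hw (norm_constantCoeff_denomPoly h i)
  have hT := coeffBoundedBy_tailSeries (Nat.zero_le p) i
  have hne : constantCoeff (denomPoly p h i : ℚ_[p]⟦X⟧) ≠ 0 := by
    rw [← norm_ne_zero_iff, norm_constantCoeff_denomPoly]
    exact (zpow_pos (p_ne_zero.symm.lt_of_le (Nat.cast_nonneg p)) _).ne'
  have hinv : evalTsum (denomPoly p h i : ℚ_[p]⟦X⟧)⁻¹ t = ((denomPoly p h i).eval t)⁻¹ := by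
    refine eq_inv_of_mul_eq_one_right ?_
    rw [← evalTsum_coe, ← evalTsum_mul (summable_of_coeffBoundedBy hD ht)
      (summable_of_coeffBoundedBy hDinv ht), PowerSeries.mul_inv_cancel _ hne,
      ← Polynomial.coe_one, evalTsum_coe, Polynomial.eval_one]
  rw [zSeries, evalTsum_mul (summable_of_coeffBoundedBy (coeffBoundedBy_uPowDivP i).neg ht)
      (summable_of_coeffBoundedBy (hT.mul hw hDinv) ht),
    evalTsum_mul (summable_of_coeffBoundedBy hT ht) (summable_of_coeffBoundedBy hDinv ht), hinv,
    evalTsum_tailSeries ht, ← Polynomial.coe_neg, evalTsum_coe]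
  simp only [zI, uPowDivP, denomPoly, denomFactor, uPoly, Polynomial.eval_prod,
    Polynomial.eval_neg, Polynomial.eval_sub, Polynomial.eval_mul, Polynomial.eval_C,
    Polynomial.eval_pow, Polynomial.eval_add, Polynomial.eval_X]
  rw [add_comm t]
  field_simp

theorem hasFPowerSeriesOnBall_zI (h i : ℕ) :
    HasFPowerSeriesOnBall (zI p h i)
      (FormalMultilinearSeries.ofScalars ℚ_[p] fun k => coeff k (zSeries p h i)) p
      ((p : NNReal)⁻¹ : NNReal) := by
  have hZ := coeffBoundedBy_zSeries (p := p) h i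
  refine hasFPowerSeriesOnBall_ofScalars (𝕜 := ℚ_[p])
    (inv_pos.mpr (by exact_mod_cast hp.out.pos : (0 : NNReal) < p))
    (C := (p : ℝ) ^ (1 - (p : ℤ) ^ i + ((i * (h - 1) : ℕ) : ℤ))) (fun k => ?_) (fun y hy => ?_)
  · rw [NNReal.coe_inv, NNReal.coe_natCast]
    refine (mul_le_mul_of_nonneg_right (norm_coeff_le_pow_of_coeffBoundedBy hZ k)
      (by positivity)).trans_eq ?_
    rw [mul_assoc, ← mul_pow, mul_inv_cancel₀ p_ne_zero, one_pow, mul_one]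
  · have hy' : ‖y‖ < (p : ℝ)⁻¹ := by simpa using hy
    rw [← evalTsum_zSeries hy' h i]
    exact (summable_of_coeffBoundedBy hZ hy').of_norm.hasSum

theorem norm_iteratedDeriv_zI_le (h i n : ℕ) :
    ‖iteratedDeriv n (zI p h i) p‖ ≤
      (p : ℝ) ^ (1 - (p : ℤ) ^ i + ((i * (h - 1) : ℕ) : ℤ)) * padicWeight p (min i p) n := by
  rw [(hasFPowerSeriesOnBall_zI h i).iteratedDeriv_eq_factorial_mul, norm_mul]
  exact (mul_le_of_le_one_left (norm_nonneg _)
    (IsUltrametricDist.norm_natCast_le_one ℚ_[p] _)).trans (coeffBoundedBy_zSeries h i n)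

end ZExpansion

open ZExpansion in
theorem stmt6_general (p : ℕ) [Fact p.Prime] (h i : ℕ) (hh : 1 ≤ h) :
    ‖zI p h i (p : ℚ_[p])‖ ≤
      (p : ℝ) ^ (-(((p : ℤ) ^ i - (i : ℤ) * ((h : ℤ) - 1) - 1))) ∧
    ∀ n : ℕ, 0 < n → (n : ℤ) < (p : ℤ) - 1 →
      ‖iteratedDeriv n (zI p h i) (p : ℚ_[p])‖ ≤
        (p : ℝ) ^ (-(((p : ℤ) ^ i + min (i : ℤ) (p : ℤ) - (n : ℤ)
          - (i : ℤ) * ((h : ℤ) - 1) - 1))) := by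
  have hbound := norm_iteratedDeriv_zI_le (p := p) h i
  have hexp : ((i * (h - 1) : ℕ) : ℤ) = i * ((h : ℤ) - 1) := by
    push_cast [Nat.cast_sub hh]
    ring
  refine ⟨?_, fun n hn0 hnp => ?_⟩
  · rw [← iteratedDeriv_zero (f := zI p h i)]
    refine (hbound 0).trans_eq ?_
    rw [(isCoeffWeight_padicWeight _).map_zero, mul_one, hexp]
    ring_nf
  · refine (hbound n).trans_eq ?_
    rw [padicWeight_of_mem_Icc (mem_Icc.mpr ⟨hn0, by omega⟩), ← zpow_add₀ p_ne_zero, hexp]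
    push_cast
    ring_nf

/-- for `i ≥ 1`, `v_p(z_i|_{u=p}) ≥ p^i - i(h-1) - 1`, and for
`0 < n < p - 1`, `v_p((d^n z_i/du^n)|_{u=p}) ≥ p^i + min(i,p) - n - i(h-1) - 1`;
stated via the `p`-adic norm (`v_p(x) ≥ k` iff `‖x‖ ≤ p^{-k}`). -/
theorem stmt6 (p : ℕ) [Fact p.Prime] (h i : ℕ) (hh : 1 ≤ h) (hi : 1 ≤ i) :
    ‖zI p h i (p : ℚ_[p])‖ ≤
      (p : ℝ) ^ (-(((p : ℤ) ^ i - (i : ℤ) * ((h : ℤ) - 1) - 1))) ∧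
    ∀ n : ℕ, 0 < n → (n : ℤ) < (p : ℤ) - 1 →
      ‖iteratedDeriv n (zI p h i) (p : ℚ_[p])‖ ≤
        (p : ℝ) ^ (-(((p : ℤ) ^ i + min (i : ℤ) (p : ℤ) - (n : ℤ)
          - (i : ℤ) * ((h : ℤ) - 1) - 1))) :=
  stmt6_general p h i hh
end

section
/- Let $k$ be a field of characteristic $p$, $G$ a split reductive group over $k$ with $Z^{\mathrm{der}}$ étale, and $\mu', \mu$ dominant cocharacters with $\mu' \le \mu$ and $h_\mu < p$. Consider elements $Y = \sum_{\alpha, i} Y_{\alpha,i} u^i e_\alpha + (\text{torus part})$ of the tangent space $V_{\mu'}$ of the translated open cell subject to the differential constraint $u\frac{dY}{du} + [Y, \mu'] \in \mathfrak{g}_{k[[u]]}$. Then the space of solutions $V_{\mu'}^\nabla$ has dimension equal to $\dim P_{\mu'}\backslash G$, the number of positive roots $\alpha$ with $\langle \mu', \alpha \rangle > 0$. -/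
/-- Let `k` have characteristic `p`, `μ'` dominant with `h_μ < p`.
The solution space `V_{μ'}^∇` of the differential constraint
`u dY/du + [Y, μ'] ∈ g[[u]]` inside the tangent space `V_{μ'}` of the translated
open cell has dimension `dim P_{μ'}\G = #{α ∈ Φ⁺ : ⟨μ',α⟩ > 0}`.
We model `V_{μ'}` via coefficient functions `Y : Φ → ℤ → k` of the
root components (`m α = ⟨μ',α⟩`), supported in degrees `m α ≤ i ≤ -1`; the
constraint on the `α`-component reads `(i - ⟨μ',α⟩)·Y_{α,i} = 0` for `i < 0`. -/
theorem stmt8 {k : Type*} [Field k] (p : ℕ) [Fact p.Prime] [CharP k p]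
    {Φ : Type*} [Fintype Φ]
    (neg : Φ → Φ) (hneg : ∀ α, neg (neg α) = α)      -- α ↦ -α
    (Pos : Φ → Prop)
    (hPosneg : ∀ α, Pos α ↔ ¬ Pos (neg α))
    (m : Φ → ℤ) (hm : ∀ α, m (neg α) = - m α)        -- m α = ⟨μ',α⟩
    (hdom : ∀ α, ¬ Pos α → m α ≤ 0)                  -- μ' is dominant
    (hmu : ∀ α, m α < (p : ℤ))                       -- h_μ < p
    (V : Submodule k (Φ → ℤ → k))                    -- V_{μ'}^∇
    (hV : ∀ Y, Y ∈ V ↔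
      ((∀ α i, i < m α → Y α i = 0) ∧ (∀ α i, (0:ℤ) ≤ i → Y α i = 0) ∧
       ∀ α i, i < 0 → ((i - m α : ℤ) : k) * Y α i = 0)) :
    Module.finrank k V = Nat.card {α : Φ // Pos α ∧ 0 < m α} := by
  have hml : ∀ α, -(p : ℤ) < m α := by
    intro α
    have := hmu (neg α)
    rw [hm] at this
    omega
  -- evaluation map at the bottom degree
  let f : V →ₗ[k] ({α : Φ // m α < 0} → k) :=
    { toFun := fun Y s => (Y : Φ → ℤ → k) s.1 (m s.1)
      map_add' := fun Y Z => rfl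
      map_smul' := fun c Y => rfl }
  have hzero : ∀ Y ∈ V, ∀ α i, (i ≠ m α ∨ ¬ m α < 0) → Y α i = 0 := by
    intro Y hY α i hi
    rw [hV] at hY
    obtain ⟨h1, h2, h3⟩ := hY
    rcases lt_trichotomy i (m α) with h | h | h
    · exact h1 α i h
    · subst h
      rcases hi with h | h
      · exact absurd rfl h
      · exact h2 _ _ (by omega)
    · rcases le_or_gt 0 i with h0 | h0
      · exact h2 α i h0
      · have hc : ((i - m α : ℤ) : k) ≠ 0 := by
          rw [Ne, CharP.intCast_eq_zero_iff k p]
          intro hd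
          have hp := hmu α
          have hp2 := hml α
          have := Int.le_of_dvd (by omega) hd
          omega
        have := h3 α i h0
        exact (mul_eq_zero.mp this).resolve_left hc
  have hinj : Function.Injective f := by
    rw [← LinearMap.ker_eq_bot, LinearMap.ker_eq_bot']
    intro Y hY
    apply Subtype.ext
    funext α i
    by_cases hcase : i = m α ∧ m α < 0
    · have := congrFun hY ⟨α, hcase.2⟩
      simpa [f, hcase.1] using this
    · have : (Y : Φ → ℤ → k) α i = 0 := hzero Y.1 Y.2 α i (by tauto)
      simpa using this
  have hsurj : Function.Surjective f := by
    intro c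
    refine ⟨⟨fun α i => if h : m α < 0 ∧ i = m α then c ⟨α, h.1⟩ else 0, ?_⟩, ?_⟩
    · rw [hV]
      refine ⟨?_, ?_, ?_⟩
      · intro α i hi
        rw [dif_neg (by omega)]
      · intro α i hi
        rw [dif_neg (by omega)]
      · intro α i hi
        by_cases h : m α < 0 ∧ i = m α
        · rw [h.2]
          simp
        · rw [dif_neg h, mul_zero]
    · funext s
      show (if h : m s.1 < 0 ∧ m s.1 = m s.1 then c ⟨s.1, h.1⟩ else 0) = c s
      rw [dif_pos ⟨s.2, rfl⟩]
  have e := LinearEquiv.ofBijective f ⟨hinj, hsurj⟩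
  rw [e.finrank_eq, Module.finrank_fintype_fun_eq_card,
    ← Nat.card_eq_fintype_card]
  have hP : ∀ α, 0 < m α → Pos α := by
    intro α h
    by_contra hc
    have := hdom α hc
    omega
  exact Nat.card_congr
    { toFun := fun s => ⟨neg s.1,
        ⟨hP _ (by rw [hm]; have := s.2; omega), by rw [hm]; have := s.2; omega⟩⟩
      invFun := fun t => ⟨neg t.1, by rw [hm]; have := t.2.2; omega⟩
      left_inv := fun s => Subtype.ext (hneg s.1)
      right_inv := fun t => Subtype.ext (hneg t.1) }
end

section
/- (Combinatorial core of uniqueness of Kisin lattices.) Let $\Phi$ be a root system with highest root $\alpha_h$, let $p$ be a prime, and let $\mu$ be a dominant coweight with $h_\mu = \max_{\alpha\in\Phi}\langle\mu,\alpha\rangle$. Suppose $(p-1)\langle\lambda,\alpha_h\rangle > 2h_\mu$ for every nonzero dominant coweight $\lambda$. Let $(\lambda_\sigma)_{\sigma\in\mathcal{J}}$ be a finite family of dominant coweights indexed cyclically by $\mathcal{J}$ (with successor $\sigma \mapsto \sigma\varphi$), and suppose for each $\sigma$ there exist dominant $\mu'_\sigma, \mu''_\sigma \le \mu_\sigma$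 with $h_{\mu_\sigma} \le h_\mu$ such that $p\lambda_{\sigma\varphi^{-1}} - \lambda_\sigma \le \mu'_\sigma + (-\mu''_\sigma)^{\mathrm{dom}}$. Then $\lambda_\sigma = 0$ for all $\sigma$. -/
/-- combinatorial core of uniqueness of Kisin lattices: Suppose
`(p-1)⟨λ,α_h⟩ > 2 h_μ` for every nonzero dominant coweight `λ`. Let
`(λ_σ)_{σ ∈ J}` be a family of dominant coweights indexed cyclically by `J`
(successor `φs`), and suppose for each `σ` there are `μ'_σ` and
`ν_σ = (-μ''_σ)^dom` with `⟨μ'_σ, α_h⟩ ≤ h_μ` and `|⟨ν_σ, α_h⟩| ≤ h_μ` such that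
`p·λ_{σφ⁻¹} - λ_σ ≤ μ'_σ + ν_σ` in the dominance order.  Then `λ_σ = 0` for
all `σ`.  Here `f` is the pairing with the highest root `α_h`, which is
monotone for the dominance order and nonnegative on dominant coweights. -/
theorem stmt9 {W : Type*} [AddCommGroup W] (p : ℕ) (hp : 2 ≤ p)
    (f : W →+ ℤ)
    (Dom : W → Prop)
    (le : W → W → Prop)
    (hle : ∀ x y, le x y → f x ≤ f y)
    (hDomNonneg : ∀ lam, Dom lam → 0 ≤ f lam)
    (hmu : ℤ) (hmu0 : 0 ≤ hmu)
    (hFL : ∀ lam : W, Dom lam → lam ≠ 0 → 2 * hmu < ((p : ℤ) - 1) * f lam)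
    {J : Type*} [Fintype J] [Nonempty J]
    (φs : J ≃ J)
    (lam : J → W) (hlamDom : ∀ σ, Dom (lam σ))
    (mu' nu : J → W)
    (hmu' : ∀ σ, f (mu' σ) ≤ hmu)
    (hnu : ∀ σ, |f (nu σ)| ≤ hmu)
    (hineq : ∀ σ, le ((p : ℤ) • lam (φs.symm σ) - lam σ) (mu' σ + nu σ)) :
    ∀ σ, lam σ = 0 := by
  obtain ⟨σ0, -, hσ0⟩ := Finset.exists_max_image Finset.univ (fun σ => f (lam σ))
    ⟨Classical.arbitrary J, Finset.mem_univ _⟩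
  have key : ∀ σ, f (lam σ) = 0 := by
    have h1 : ((p : ℤ) - 1) * f (lam σ0) ≤ 2 * hmu := by
      have hq := hle _ _ (hineq (φs σ0))
      simp only [map_sub, map_add, map_zsmul, φs.symm_apply_apply, smul_eq_mul] at hq
      have h3 := hσ0 (φs σ0) (Finset.mem_univ _)
      have h4 := hmu' (φs σ0)
      have h5 := (abs_le.mp (hnu (φs σ0))).2
      nlinarith
    have h0 : lam σ0 = 0 := by
      by_contra hne
      exact absurd h1 (not_le.mpr (hFL _ (hlamDom σ0) hne))
    intro σ
    have hm := hσ0 σ (Finset.mem_univ _)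
    have hn := hDomNonneg _ (hlamDom σ)
    rw [h0, map_zero] at hm
    omega
  intro σ
  by_contra hne
  have h := hFL _ (hlamDom σ) hne
  rw [key σ, mul_zero] at h
  omega
end

section
/- Let $N_0 = 0$ and define recursively $N_{i+1} - N_i = E(u)\,\mathrm{Ad}_G(C)(\varphi(N_i - N_{i-1}))$ with $N_1$ given, and set $\mathcal{A}_C(X) = E(u)^h \mathrm{Ad}_G(C)(\varphi(X))$, $L_1 = \frac{E(u)^h}{u\lambda} N_1$, $z_0 = -\frac{u\varphi(\lambda)}{p}$, $z_i = -\frac{u^{p^i}\varphi^{i+1}(\lambda)}{p\prod_{j=1}^i \varphi^j(E(u))^{h-1}}$. Then for all $i \ge 0$, $E(u)^{h-1}(N_{i+1} - N_i) = z_i\, \mathcal{A}_C^i(L_1)$, and consequently $E(u)^{h-1} N_\infty = \sum_{i \ge 0} z_i\,\mathcal{A}_C^i(L_1)$ where $N_\infty = \lim N_i$. -/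
/-!
Both sides of `E^{h-1}(N_{i+1} - N_i) = z_i 𝒜_C^i(L₁)` are propagated by the same rule: applying
`Ad ∘ φ` to the identity for `i` multiplies the left side by `φ(E)^{h-1}` and turns `z_i` into
`φ(z_i) = z_{i+1} φ(E)^{h-1}`, so cancelling the unit `φ(E)^{h-1}` and multiplying by `E^h` gives the
identity for `i + 1`. The case `i = 0` is `z₀ E = uλ`, obtained from the normalisations of `λ` and
`z₀` by cancelling `p`. Summing the identities telescopes to `E^{h-1} N_n`.
-/

section

variable {R M : Type*} [CommRing R] [AddCommGroup M] [Module R M]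

theorem pow_pred_smul_eq_of_smul_eq_pow_smul {E pe uu lam c z₀ : R} {h : ℕ} (hh : 1 ≤ h)
    (hE : IsUnit E) (hpe : IsUnit pe) (hlam : pe * lam = -(E * c)) (hz₀ : pe * z₀ = -(uu * c))
    {N₁ L₁ : M} (hL₁ : (uu * lam) • L₁ = E ^ h • N₁) : E ^ (h - 1) • N₁ = z₀ • L₁ := by
  have hz₀E : z₀ * E = uu * lam :=
    hpe.mul_left_cancel (by linear_combination E * hz₀ - uu * hlam)
  apply hE.smul_left_cancel.mp
  rw [smul_smul, ← pow_succ', Nat.sub_add_cancel hh, ← hL₁, ← hz₀E, mul_comm, mul_smul]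

theorem pow_pred_smul_succ_of_semilinear (φR : R →+* R) {φM : M → M}
    (hφsmul : ∀ (r : R) (x : M), φM (r • x) = φR r • φM x) (Ad : M →ₗ[R] M)
    {E z z' : R} {h : ℕ} (hh : 1 ≤ h) (hφE : IsUnit (φR E)) (hz' : z' * φR E ^ (h - 1) = φR z)
    {D X : M} (hDX : E ^ (h - 1) • D = z • X) :
    E ^ (h - 1) • (E • Ad (φM D)) = z' • (E ^ h • Ad (φM X)) := by
  have hAdφ : Ad (φM D) = z' • Ad (φM X) := by
    apply (hφE.pow (h - 1)).smul_left_cancel.mp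
    rw [← map_smul, ← map_pow, ← hφsmul, hDX, hφsmul, ← hz', smul_comm, mul_smul, map_smul,
      map_smul, map_pow]
  rw [hAdφ, smul_smul, ← pow_succ, Nat.sub_add_cancel hh, smul_comm]

end

theorem stmt12_general {R : Type*} [CommRing R] {M : Type*} [AddCommGroup M] [Module R M]
    [TopologicalSpace M] [IsTopologicalAddGroup M] [ContinuousConstSMul R M]
    (φR : R →+* R) (φM : M → M)
    (hφsmul : ∀ (r : R) (x : M), φM (r • x) = φR r • φM x)
    (Ad : M →ₗ[R] M)                                 -- Ad_G(C)
    (E pe uu lam : R) (h : ℕ) (hh : 1 ≤ h)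
    [Invertible pe] [Invertible E]
    (hlam : pe * lam = -(E * φR lam))                -- -pλ = E·φ(λ)
    (N : ℕ → M) (hN0 : N 0 = 0)
    (hrec : ∀ i, N (i + 2) - N (i + 1) = E • Ad (φM (N (i + 1) - N i)))
    (L1 : M) (hL1 : (uu * lam) • L1 = E ^ h • N 1)   -- L₁ = (E^h/(uλ))·N₁
    (z : ℕ → R)
    (hz0 : pe * z 0 = -(uu * φR lam))
    (hzrec : ∀ i, z (i + 1) * (φR E) ^ (h - 1) = φR (z i))
    (AC : M → M) (hAC : ∀ X, AC X = E ^ h • Ad (φM X)) :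
    (∀ i, E ^ (h - 1) • (N (i + 1) - N i) = z i • (AC^[i] L1)) ∧
    ∀ Ninf : M, Filter.Tendsto N Filter.atTop (nhds Ninf) →
      Filter.Tendsto (fun n => ∑ i ∈ Finset.range n, z i • (AC^[i] L1))
        Filter.atTop (nhds (E ^ (h - 1) • Ninf)) := by
  have hE := isUnit_of_invertible E
  have key : ∀ i, E ^ (h - 1) • (N (i + 1) - N i) = z i • (AC^[i] L1) := by
    intro i
    induction i with
    | zero =>
      simpa [hN0] using pow_pred_smul_eq_of_smul_eq_pow_smul hh hE (isUnit_of_invertible pe)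
        hlam hz0 hL1
    | succ i ih =>
      rw [hrec, Function.iterate_succ_apply', hAC]
      exact pow_pred_smul_succ_of_semilinear φR hφsmul Ad hh (hE.map φR) (hzrec i) ih
  have hsum : ∀ n, ∑ i ∈ Finset.range n, z i • (AC^[i] L1) = E ^ (h - 1) • N n := fun n => by
    simp_rw [← key, ← Finset.smul_sum, Finset.sum_range_sub, hN0, sub_zero]
  refine ⟨key, fun Ninf hN => ?_⟩
  simpa only [hsum] using hN.const_smul (E ^ (h - 1))

/-- telescoping the monodromy series: with `N₀ = 0`,
`N_{i+1} - N_i = E(u)·Ad_G(C)(φ(N_i - N_{i-1}))`, `𝒜_C(X) = E(u)^h Ad_G(C)(φ(X))`,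
`L₁ = (E(u)^h/(uλ))·N₁`, and the scalars `z_i` satisfying
`p·z₀ = -(u·φ(λ))` and `z_{i+1}·φ(E)^{h-1} = φ(z_i)` (which hold for
`z_i = -u^{p^i} φ^{i+1}(λ)/(p ∏_{j=1}^i φ^j(E)^{h-1})`), one has
`E^{h-1}(N_{i+1} - N_i) = z_i 𝒜_C^i(L₁)` for all `i`, and consequently the
partial sums `∑_{i<n} z_i 𝒜_C^i(L₁) = E^{h-1} N_n` converge to `E^{h-1} N_∞`
whenever `N_i → N_∞`. -/
theorem stmt12 {R : Type*} [CommRing R] {M : Type*} [AddCommGroup M] [Module R M]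
    [TopologicalSpace M] [IsTopologicalAddGroup M] [ContinuousConstSMul R M]
    (φR : R →+* R) (φM : M → M)
    (hφadd : ∀ x y, φM (x + y) = φM x + φM y)
    (hφsmul : ∀ (r : R) (x : M), φM (r • x) = φR r • φM x)
    (Ad : M →ₗ[R] M)                                 -- Ad_G(C)
    (E pe uu lam : R) (h : ℕ) (hh : 1 ≤ h)
    [Invertible pe] [Invertible E]
    (hlam : pe * lam = -(E * φR lam))                -- -pλ = E·φ(λ)
    (N : ℕ → M) (hN0 : N 0 = 0)
    (hrec : ∀ i, N (i + 2) - N (i + 1) = E • Ad (φM (N (i + 1) - N i)))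
    (L1 : M) (hL1 : (uu * lam) • L1 = E ^ h • N 1)   -- L₁ = (E^h/(uλ))·N₁
    (z : ℕ → R)
    (hz0 : pe * z 0 = -(uu * φR lam))
    (hzrec : ∀ i, z (i + 1) * (φR E) ^ (h - 1) = φR (z i))
    (AC : M → M) (hAC : ∀ X, AC X = E ^ h • Ad (φM X)) :
    (∀ i, E ^ (h - 1) • (N (i + 1) - N i) = z i • (AC^[i] L1)) ∧
    ∀ Ninf : M, Filter.Tendsto N Filter.atTop (nhds Ninf) →
      Filter.Tendsto (fun n => ∑ i ∈ Finset.range n, z i • (AC^[i] L1))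
        Filter.atTop (nhds (E ^ (h - 1) • Ninf)) :=
  stmt12_general φR φM hφsmul Ad E pe uu lam h hh hlam N hN0 hrec L1 hL1 z hz0 hzrec AC hAC
end

section
/- Let $k$ have characteristic $p$, $G$ split reductive over $k$ with $Z^{\mathrm{der}}$ étale, and let $\mu \ge \mu'$ be dominant cocharacters with $h_\mu < p$. Inside the upper bound $V^{\mu}_{\mu'}$ for the tangent space to $(\mathrm{Gr}_G^{\le\mu})u^{-\mu'}$, any element $Y$ satisfying $u\frac{dY}{du} + [Y,\mu'] \in \mathfrak{g}_{k[[u]]}$ must have: (a) vanishing component in $u^{-j}\mathrm{Lie}\,T$ for all $1 \le j \le h_\mu$, and (b) for each root $\alpha$, vanishing components $Y_{\alpha,i}$ for all $-\tfrac12(h_\mu - \langle\mu',\alpha\rangle) \le i \le -1$ except possibly $i = \langle\mu',\alpha\rangle$ when $\langle\mu',\alpha\rangle < 0$. -/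
lemma intCast_ne_zero_of_abs_lt {k : Type*} [Field k] (p : ℕ) [Fact p.Prime] [CharP k p]
    (n : ℤ) (hn0 : n ≠ 0) (hlo : -(p:ℤ) < n) (hhi : n < p) : ((n : ℤ) : k) ≠ 0 := by
  intro hcast
  rw [CharP.intCast_eq_zero_iff k p] at hcast
  have h1 : (p : ℤ) ∣ |n| := (dvd_abs _ _).mpr hcast
  have h2 : (p : ℤ) ≤ |n| := Int.le_of_dvd (abs_pos.mpr hn0) h1
  rcases abs_cases n with ⟨e,_⟩|⟨e,_⟩ <;> omega

/-- `k` has characteristic `p`, `μ' ≤ μ` dominant with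
`h = h_μ < p` and `|⟨μ',α⟩| ≤ h_μ` for all roots `α`.  Any element `Y` of the
upper bound `V^μ_{μ'}` for the tangent space to `(Gr^{≤μ}_G)u^{-μ'}`
(torus components `Yt i` supported in `-h_μ ≤ i ≤ -1`, root components `Y α i`
supported in `1 ≤ -i ≤ (h_μ - ⟨μ',α⟩)/2`) satisfying the differential
constraint `u dY/du + [Y,μ'] ∈ 𝔤_{k[[u]]}` (i.e. `i · Yt i = 0` and
`(i - ⟨μ',α⟩)·Y α i = 0` in `k` for `i < 0`) has: (a) vanishing torus
components in all negative degrees, and (b) vanishing root components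
`Y α i = 0` for all `i < 0` with `i ≠ ⟨μ',α⟩`. -/
theorem stmt15 {k : Type*} [Field k] (p : ℕ) [Fact p.Prime] [CharP k p]
    {Φ : Type*} (m : Φ → ℤ) (h : ℕ) (hhp : h < p)
    (hm : ∀ α, m α ≤ (h : ℤ) ∧ -(h : ℤ) ≤ m α)
    {Vt : Type*} [AddCommGroup Vt] [Module k Vt]
    (Yt : ℤ → Vt) (Y : Φ → ℤ → k)
    (hYtsupp : ∀ i, Yt i ≠ 0 → i < 0 ∧ -i ≤ (h : ℤ))
    (hYsupp : ∀ α i, Y α i ≠ 0 → i < 0 ∧ 2 * (-i) ≤ (h : ℤ) - m α)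
    (hconstrT : ∀ i : ℤ, i < 0 → ((i : ℤ) : k) • Yt i = 0)
    (hconstrR : ∀ (α : Φ) (i : ℤ), i < 0 → ((i - m α : ℤ) : k) * Y α i = 0) :
    (∀ i : ℤ, i < 0 → Yt i = 0) ∧
    (∀ (α : Φ) (i : ℤ), i < 0 → i ≠ m α → Y α i = 0) := by
  constructor
  · intro i hi
    by_contra hne
    obtain ⟨_, hbound⟩ := hYtsupp i hne
    have hc : ((i : ℤ) : k) ≠ 0 :=
      intCast_ne_zero_of_abs_lt p i (by omega) (by omega) (by omega)
    have := hconstrT i hi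
    exact hne (by simpa [smul_eq_zero, hc] using this)
  · intro α i hi hne
    by_contra hne'
    obtain ⟨_, hbound⟩ := hYsupp α i hne'
    obtain ⟨hm1, hm2⟩ := hm α
    have hc : ((i - m α : ℤ) : k) ≠ 0 :=
      intCast_ne_zero_of_abs_lt p (i - m α) (by omega) (by omega) (by omega)
    have := hconstrR α i hi
    rcases mul_eq_zero.mp this with h0 | h0
    · exact hc h0
    · exact hne' h0
end

section
/- Let $A$ be a local Artinian $\mathbf{F}'$-algebra and suppose $X \in \mathfrak{g}'_{\mathbf{F}'((u))}$ satisfies $X + Y_1 - Y_2 = \mathrm{Ad}_G(u^{\mu'}B_2)(\varphi(X))$, where $B_2 \in L^+G'(\mathbf{F}')$, $\varphi(X)(u) = X(u^p)$ coefficientwise (semilinearly), $\mu'$ is dominant with $\langle\mu',\alpha\rangle < p-1$ for all roots $\alpha$, and $Y_1, Y_2 \in \mathfrak{t}'_{\mathbf{F}'[[u]]} \oplus \bigoplus_\alpha u^{\min(-\langle\mu',\alpha\rangle,0)}\mathfrak{g}'_{\alpha,\mathbf{F}'[[u]]}$. Then $X \in \mathfrak{g}'_{\mathbf{F}'[[u]]}$.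 -/
/-- Suppose `X ∈ 𝔤'_{F'((u))}` (modelled by Laurent coefficient
functions `ι → ℤ → F'` on a weight basis of `𝔤'`, with `s i = ⟨μ',α_i⟩`, and
`s i = 0` on torus indices) satisfies
`X + Y₁ - Y₂ = Ad(u^{μ'}B₂)(φ(X))`, where `B₂ ∈ L⁺G'(F')` acts by an additive
operator `B` preserving the `u`-adic filtration exactly, `Ad(u^{μ'})` shifts the
`i`-th component by `s i`, `φ(X)(u) = X(u^p)` coefficientwise via a field
endomorphism `σ`, the Fontaine–Laffaille bound `|⟨μ',α⟩| < p - 1` holds for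
all roots, and `Y₁, Y₂ ∈ 𝔱'_{F'[[u]]} ⊕ ⊕_α u^{min(-⟨μ',α⟩,0)}𝔤'_{α,F'[[u]]}`.
Then `X ∈ 𝔤'_{F'[[u]]}`. -/
theorem stmt16 {F : Type*} [Field F] (p : ℕ) (hp : 2 ≤ p)
    {ι : Type*} (s : ι → ℤ)
    (hs : ∀ i, -((p : ℤ) - 1) < s i ∧ s i < (p : ℤ) - 1)
    (σ : F →+* F)
    (X Y1 Y2 : ι → ℤ → F)
    (hXlaurent : ∃ n0 : ℤ, ∀ i n, n < n0 → X i n = 0)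
    (hY1 : ∀ i n, n < min (-(s i)) 0 → Y1 i n = 0)
    (hY2 : ∀ i n, n < min (-(s i)) 0 → Y2 i n = 0)
    (B : (ι → ℤ → F) → (ι → ℤ → F))
    (hBadd : ∀ f g, B (f + g) = B f + B g)
    (hBfil : ∀ (n : ℤ) (f : ι → ℤ → F),
      (∀ i k, k < n → f i k = 0) ↔ (∀ i k, k < n → B f i k = 0))
    (Frob : (ι → ℤ → F) → (ι → ℤ → F))
    (hFrob : ∀ f i n, Frob f i n = if ((p : ℤ) ∣ n) then σ (f i (n / (p : ℤ))) else 0)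
    (heq : ∀ i n, X i n + Y1 i n - Y2 i n = B (Frob X) i (n + s i)) :
    ∀ i n, n < 0 → X i n = 0 := by

  classical
  by_contra hcon
  push_neg at hcon
  obtain ⟨i0, n1, hn1, hX0⟩ := hcon
  obtain ⟨n0, hn0⟩ := hXlaurent
  have hp0 : (0:ℤ) < (p:ℤ) := by exact_mod_cast Nat.lt_of_lt_of_le Nat.zero_lt_two hp
  have hp2 : (2:ℤ) ≤ (p:ℤ) := by exact_mod_cast hp
  obtain ⟨N, hNP, hleast⟩ := Int.exists_least_of_bdd
    (P := fun z => z < 0 ∧ ∃ i, X i z ≠ 0)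
    ⟨n0, fun z hz => by
      obtain ⟨_, i, hi⟩ := hz
      by_contra h
      exact hi (hn0 i z (by omega))⟩
    ⟨n1, hn1, i0, hX0⟩
  obtain ⟨hN0, j0, hXN⟩ := hNP
  have hXbelow : ∀ j q, q < N → X j q = 0 := by
    intro j q hq
    by_contra h
    exact absurd (hleast q ⟨by omega, j, h⟩) (by omega)
  have hFzero : ∀ j k, k < (p:ℤ)*N → Frob X j k = 0 := by
    intro j k hk
    rw [hFrob]
    split_ifs with hd
    · obtain ⟨q, rfl⟩ := hd
      rw [Int.mul_ediv_cancel_left _ (by omega : (p:ℤ) ≠ 0)]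
      rw [hXbelow j q (lt_of_mul_lt_mul_left hk (le_of_lt hp0))]
      exact map_zero σ
    · rfl
  have hBzero : ∀ j k, k < (p:ℤ)*N → B (Frob X) j k = 0 := (hBfil ((p:ℤ)*N) _).mp hFzero
  have hFne : Frob X j0 ((p:ℤ)*N) ≠ 0 := by
    rw [hFrob]
    rw [if_pos (Dvd.intro N rfl), Int.mul_ediv_cancel_left _ (by omega : (p:ℤ) ≠ 0)]
    intro h
    exact hXN (RingHom.injective σ (h.trans (map_zero σ).symm))
  have hnotall : ¬ ∀ j k, k < (p:ℤ)*N + 1 → B (Frob X) j k = 0 := by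
    intro h
    exact hFne ((hBfil ((p:ℤ)*N + 1) _).mpr h j0 ((p:ℤ)*N) (by omega))
  push_neg at hnotall
  obtain ⟨j, k, hk, hBne⟩ := hnotall
  have hkeq : k = (p:ℤ)*N := by
    by_contra h
    exact hBne (hBzero j k (by omega))
  subst hkeq
  set m : ℤ := (p:ℤ)*N - s j with hm
  have hsj := hs j
  have hpN : (p:ℤ)*N ≤ -(p:ℤ) := by nlinarith
  have hmN : m < N := by
    have h1 : ((p:ℤ)-1)*N ≤ ((p:ℤ)-1)*(-1) :=
      mul_le_mul_of_nonneg_left (by omega) (by omega)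
    have := hsj.1
    nlinarith
  have hmmin : m < min (-(s j)) 0 := by
    apply lt_min
    · omega
    · omega
  have := heq j m
  rw [hXbelow j m hmN, hY1 j m hmmin, hY2 j m hmmin] at this
  simp only [add_zero, sub_zero, zero_add] at this
  have hms : m + s j = (p:ℤ)*N := by omega
  rw [hms] at this
  exact hBne this.symm
end
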